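/- arXiv:1805.11955 — 3 statements merged into one kernel-verified Lean document; each statement's English description precedes it below -/
import Mathlib

section
/- Let S be an inverse semigroup and let R be a system over S. Then the following are equivalent: (i) R is unital epsilon-strong, i.e. for every s ∈ S the module R_s is unital both as a left R_s R_{s*}-module and as a right R_{s*} R_s-module; (ii) R is symmetric and for every s ∈ S the ring R_s R_{s*} is unital; (iii) for every s ∈ S there exists ε_s ∈ R_s R_{s*} such that for all r ∈ R_s one has ε_s r = r and r ε_{s*} = r (where ε_{s*} ∈ R_{s*} R_s is the element associated to s*). -/
/-!
A left identity and a right identity of the same ring coincide. Under (i), the left unit `a_s`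
of `R_s` acts as a left identity on `R_s R_{s*}`, and the right unit `b_{s*}` of `R_{s*}`, which
lies in `R_{s**} R_{s*} = R_s R_{s*}`, acts there as a right identity; hence `a_s = b_{s*}` is a
two-sided identity of `R_s R_{s*}`, and `r = a_s r` gives symmetry. Conversely, symmetry writes
`R_s` both as `(R_s R_{s*}) R_s` and as `R_s (R_{s*} R_s)`, so the identities of `R_s R_{s*}` and
of `R_{s*} R_s` act on `R_s` from the left and from the right.
-/

open Pointwise

namespace PaperSys

variable {S R : Type*} [Semigroup S] [NonUnitalRing R]

/-- The additive subgroup of finite sums of products `a * b` with `a ∈ A`, `b ∈ B`. -/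
def sumProd (A B : AddSubgroup R) : AddSubgroup R :=
  AddSubgroup.closure ((A : Set R) * (B : Set R))

/-- `𝓡` is a system over the semigroup `S` on the ring `R`:
`R = Σ_{s ∈ S} R_s` and `R_s R_t ⊆ R_{st}`. -/
def IsSystem (𝓡 : S → AddSubgroup R) : Prop :=
  (⨆ s : S, 𝓡 s) = (⊤ : AddSubgroup R) ∧
    ∀ s t : S, ∀ x ∈ 𝓡 s, ∀ y ∈ 𝓡 t, x * y ∈ 𝓡 (s * t)

/-- `R₀ = Σ_{e ∈ E(S)} R_e`. -/
def sysZero (𝓡 : S → AddSubgroup R) : AddSubgroup R :=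
  ⨆ e ∈ {e : S | e * e = e}, 𝓡 e

/-- `I` is a two-sided ideal of the (possibly non-unital) ring `R`. -/
def IsRingIdeal (I : AddSubgroup R) : Prop :=
  ∀ r : R, ∀ x ∈ I, r * x ∈ I ∧ x * r ∈ I

/-- `I` is a system ideal: an ideal with `I = Σ_{s ∈ S} (I ∩ R_s)`. -/
def IsSystemIdeal (𝓡 : S → AddSubgroup R) (I : AddSubgroup R) : Prop :=
  IsRingIdeal I ∧ I = ⨆ s : S, (I ⊓ 𝓡 s)

/-- `R` is system simple: `{0}` and `R` are the only system ideals. -/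
def SystemSimple (𝓡 : S → AddSubgroup R) : Prop :=
  ∀ I : AddSubgroup R, IsSystemIdeal 𝓡 I → I = ⊥ ∨ I = ⊤

/-- `R` is a simple ring: `{0}` and `R` are the only two-sided ideals. -/
def RingSimple (R' : Type*) [NonUnitalRing R'] : Prop :=
  ∀ I : AddSubgroup R', IsRingIdeal I → I = ⊥ ∨ I = ⊤

/-- `Z(R₀)` as a subset of `R`. -/
def centerZero (𝓡 : S → AddSubgroup R) : Set R :=
  {z : R | z ∈ sysZero 𝓡 ∧ ∀ y ∈ sysZero 𝓡, z * y = y * z}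

/-- `C_R(Z(R₀))` as a subset of `R`. -/
def centCenterZero (𝓡 : S → AddSubgroup R) : Set R :=
  {x : R | ∀ z ∈ centerZero 𝓡, x * z = z * x}

/-- The system is idempotent coherent: `R₀ R_s ⊆ R_s` and `R_s R₀ ⊆ R_s`. -/
def IdemCoherent (𝓡 : S → AddSubgroup R) : Prop :=
  ∀ s : S, (∀ x ∈ sysZero 𝓡, ∀ y ∈ 𝓡 s, x * y ∈ 𝓡 s) ∧
    (∀ x ∈ sysZero 𝓡, ∀ y ∈ 𝓡 s, y * x ∈ 𝓡 s)

/-- The system is left non-degenerate. -/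
def LeftNonDeg (𝓡 : S → AddSubgroup R) : Prop :=
  ∀ e : S, e * e = e → ∀ r ∈ 𝓡 e, r ≠ 0 →
    ∃ t : S, (t * e) * (t * e) = t * e ∧ ∃ x ∈ 𝓡 t, x * r ≠ 0

/-- The system is right non-degenerate. -/
def RightNonDeg (𝓡 : S → AddSubgroup R) : Prop :=
  ∀ e : S, e * e = e → ∀ r ∈ 𝓡 e, r ≠ 0 →
    ∃ t : S, (e * t) * (e * t) = e * t ∧ ∃ x ∈ 𝓡 t, r * x ≠ 0

/-- `star` makes the semigroup `S` an inverse semigroup: `s (s*) s = s`,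
`(s*) s (s*) = s*`, and `s*` is the unique such element. -/
def IsInverseStar (star : S → S) : Prop :=
  (∀ s : S, s * star s * s = s) ∧ (∀ s : S, star s * s * star s = star s) ∧
    ∀ s t : S, s * t * s = s → t * s * t = t → t = star s

/-- Coherent: `s ≤ t` (i.e. `s = t s* s`) implies `R_s ⊆ R_t`. -/
def Coherent (star : S → S) (𝓡 : S → AddSubgroup R) : Prop :=
  ∀ s t : S, s = t * star s * s → 𝓡 s ≤ 𝓡 t

/-- Left s-unital epsilon-strong. -/
def LeftSEps (star : S → S) (𝓡 : S → AddSubgroup R) : Prop :=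
  ∀ s : S, ∀ r ∈ 𝓡 s, ∃ ε ∈ sumProd (𝓡 s) (𝓡 (star s)), ε * r = r

/-- Right s-unital epsilon-strong. -/
def RightSEps (star : S → S) (𝓡 : S → AddSubgroup R) : Prop :=
  ∀ s : S, ∀ r ∈ 𝓡 s, ∃ ε ∈ sumProd (𝓡 (star s)) (𝓡 s), r * ε = r

/-- Symmetric: `R_s R_{s*} R_s = R_s` for all `s`. -/
def IsSymmetricSys (star : S → S) (𝓡 : S → AddSubgroup R) : Prop :=
  ∀ s : S, sumProd (sumProd (𝓡 s) (𝓡 (star s))) (𝓡 s) = 𝓡 s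

/-- The ring extension `R / C_R(Z(R₀))` has the ideal intersection property. -/
def IIPCentCenterZero (𝓡 : S → AddSubgroup R) : Prop :=
  ∀ I : AddSubgroup R, IsRingIdeal I → I ≠ ⊥ →
    ∃ x : R, x ≠ 0 ∧ x ∈ I ∧ x ∈ centCenterZero 𝓡

/-- `R₀` is a maximal commutative subring of `R`: `C_R(R₀) = R₀`. -/
def MaxCommZero (𝓡 : S → AddSubgroup R) : Prop :=
  {x : R | ∀ y ∈ sysZero 𝓡, x * y = y * x} = (sysZero 𝓡 : Set R)


section SumProd

variable {A B C : AddSubgroup R}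

lemma mul_mem_sumProd {a b : R} (ha : a ∈ A) (hb : b ∈ B) : a * b ∈ sumProd A B :=
  AddSubgroup.subset_closure (Set.mul_mem_mul ha hb)

lemma sumProd_le_iff : sumProd A B ≤ C ↔ ∀ a ∈ A, ∀ b ∈ B, a * b ∈ C := by
  rw [sumProd, AddSubgroup.closure_le, Set.mul_subset_iff]
  rfl

lemma sumProd_assoc : sumProd (sumProd A B) C = sumProd A (sumProd B C) := by
  refine le_antisymm (sumProd_le_iff.2 fun x hx c hc => ?_) (sumProd_le_iff.2 fun a ha y hy => ?_)
  · suffices sumProd A B ≤ (sumProd A (sumProd B C)).comap (AddMonoidHom.mulRight c) from this hx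
    refine sumProd_le_iff.2 fun a ha b hb => ?_
    simpa only [AddSubgroup.mem_comap, AddMonoidHom.coe_mulRight, mul_assoc] using
      mul_mem_sumProd ha (mul_mem_sumProd hb hc)
  · suffices sumProd B C ≤ (sumProd (sumProd A B) C).comap (AddMonoidHom.mulLeft a) from this hy
    refine sumProd_le_iff.2 fun b hb c hc => ?_
    simpa only [AddSubgroup.mem_comap, AddMonoidHom.coe_mulLeft, mul_assoc] using
      mul_mem_sumProd (mul_mem_sumProd ha hb) hc

lemma mul_eq_of_mem_sumProd_left {e x : R} (he : ∀ a ∈ A, e * a = a)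
    (hx : x ∈ sumProd A B) : e * x = x := by
  refine AddMonoidHom.eqOn_closure (f := AddMonoidHom.mulLeft e) (g := AddMonoidHom.id R)
    ?_ hx
  rintro _ ⟨a, ha, b, -, rfl⟩
  simp [← mul_assoc, he a ha]

lemma mul_eq_of_mem_sumProd_right {e x : R} (he : ∀ b ∈ B, b * e = b)
    (hx : x ∈ sumProd A B) : x * e = x := by
  refine AddMonoidHom.eqOn_closure (f := AddMonoidHom.mulRight e) (g := AddMonoidHom.id R)
    ?_ hx
  rintro _ ⟨a, -, b, hb, rfl⟩
  simp [mul_assoc, he b hb]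

end SumProd

lemma IsInverseStar.star_star {star : S → S} (hstar : IsInverseStar star) (s : S) :
    star (star s) = s :=
  (hstar.2.2 (star s) s (hstar.2.1 s) (hstar.1 s)).symm

section Epsilon

variable (star : S → S) (𝓡 : S → AddSubgroup R)

def IsUnitalEpsStrong : Prop :=
  (∀ s : S, ∃ a ∈ sumProd (𝓡 s) (𝓡 (star s)), ∀ r ∈ 𝓡 s, a * r = r) ∧
    ∀ s : S, ∃ b ∈ sumProd (𝓡 (star s)) (𝓡 s), ∀ r ∈ 𝓡 s, r * b = r

def IsSymmetricUnital : Prop :=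
  IsSymmetricSys star 𝓡 ∧
    ∀ s : S, ∃ e ∈ sumProd (𝓡 s) (𝓡 (star s)),
      ∀ a ∈ sumProd (𝓡 s) (𝓡 (star s)), e * a = a ∧ a * e = a

def IsEpsilonFamily (ε : S → R) : Prop :=
  ∀ s : S, ε s ∈ sumProd (𝓡 s) (𝓡 (star s)) ∧ ∀ r ∈ 𝓡 s, ε s * r = r ∧ r * ε (star s) = r

variable {star 𝓡}

lemma sumProd_sumProd_star_self_le (hstar : IsInverseStar star) (hsys : IsSystem 𝓡) (s : S) :
    sumProd (sumProd (𝓡 s) (𝓡 (star s))) (𝓡 s) ≤ 𝓡 s := by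
  refine sumProd_le_iff.2 fun x hx r hr => ?_
  suffices sumProd (𝓡 s) (𝓡 (star s)) ≤ (𝓡 s).comap (AddMonoidHom.mulRight r) from this hx
  refine sumProd_le_iff.2 fun a ha b hb => ?_
  simpa only [AddSubgroup.mem_comap, AddMonoidHom.coe_mulRight, hstar.1 s] using
    hsys.2 _ s _ (hsys.2 s (star s) a ha b hb) r hr

lemma isSymmetricUnital_of_isUnitalEpsStrong (hstar : IsInverseStar star) (hsys : IsSystem 𝓡)
    (h : IsUnitalEpsStrong star 𝓡) : IsSymmetricUnital star 𝓡 := by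
  choose a ha hau using h.1
  choose b hb hbu using h.2
  have hb' (s : S) : b (star s) ∈ sumProd (𝓡 s) (𝓡 (star s)) := by
    simpa only [hstar.star_star] using hb (star s)
  have hau' (s : S) (x : R) (hx : x ∈ sumProd (𝓡 s) (𝓡 (star s))) : a s * x = x :=
    mul_eq_of_mem_sumProd_left (hau s) hx
  have hbu' (s : S) (x : R) (hx : x ∈ sumProd (𝓡 s) (𝓡 (star s))) : x * b (star s) = x :=
    mul_eq_of_mem_sumProd_right (hbu (star s)) hx
  have hab (s : S) : a s = b (star s) :=
    (hbu' s _ (ha s)).symm.trans (hau' s _ (hb' s))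
  refine ⟨fun s => le_antisymm (sumProd_sumProd_star_self_le hstar hsys s) fun r hr => ?_,
    fun s => ⟨a s, ha s, fun x hx => ⟨hau' s x hx, hab s ▸ hbu' s x hx⟩⟩⟩
  simpa only [hau s r hr] using mul_mem_sumProd (ha s) hr

lemma exists_isEpsilonFamily_of_isSymmetricUnital (hstar : IsInverseStar star)
    (h : IsSymmetricUnital star 𝓡) : ∃ ε, IsEpsilonFamily star 𝓡 ε := by
  obtain ⟨hsym, hunit⟩ := h
  choose e he heu using hunit
  refine ⟨e, fun s => ⟨he s, fun r hr => ⟨?_, ?_⟩⟩⟩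
  · rw [← hsym s] at hr
    exact mul_eq_of_mem_sumProd_left (fun x hx => (heu s x hx).1) hr
  · rw [← hsym s, sumProd_assoc] at hr
    refine mul_eq_of_mem_sumProd_right (fun x hx => (heu (star s) x ?_).2) hr
    rwa [hstar.star_star]

lemma isUnitalEpsStrong_of_isEpsilonFamily (hstar : IsInverseStar star) {ε : S → R}
    (h : IsEpsilonFamily star 𝓡 ε) : IsUnitalEpsStrong star 𝓡 := by
  refine ⟨fun s => ⟨ε s, (h s).1, fun r hr => ((h s).2 r hr).1⟩,
    fun s => ⟨ε (star s), ?_, fun r hr => ((h s).2 r hr).2⟩⟩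
  simpa only [hstar.star_star] using (h (star s)).1

end Epsilon

/-- Let `S` be an inverse semigroup and `R` a system over `S`.
The following are equivalent: (i) `R` is unital epsilon-strong (for each `s`, `R_s` is
unital as a left `R_s R_{s*}`-module and as a right `R_{s*} R_s`-module);
(ii) `R` is symmetric and every ring `R_s R_{s*}` is unital;
(iii) there is a choice `s ↦ ε_s ∈ R_s R_{s*}` such that `ε_s r = r` and
`r ε_{s*} = r` for all `r ∈ R_s`. -/
theorem stmt7 {S R : Type*} [Semigroup S] [NonUnitalRing R]
    (star : S → S) (hstar : IsInverseStar star)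
    (𝓡 : S → AddSubgroup R) (hsys : IsSystem 𝓡) :
    (((∀ s : S, ∃ a ∈ sumProd (𝓡 s) (𝓡 (star s)), ∀ r ∈ 𝓡 s, a * r = r) ∧
      (∀ s : S, ∃ b ∈ sumProd (𝓡 (star s)) (𝓡 s), ∀ r ∈ 𝓡 s, r * b = r)) ↔
      (IsSymmetricSys star 𝓡 ∧
        ∀ s : S, ∃ e ∈ sumProd (𝓡 s) (𝓡 (star s)),
          ∀ a ∈ sumProd (𝓡 s) (𝓡 (star s)), e * a = a ∧ a * e = a)) ∧
    ((IsSymmetricSys star 𝓡 ∧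
        ∀ s : S, ∃ e ∈ sumProd (𝓡 s) (𝓡 (star s)),
          ∀ a ∈ sumProd (𝓡 s) (𝓡 (star s)), e * a = a ∧ a * e = a) ↔
      (∃ ε : S → R, ∀ s : S, ε s ∈ sumProd (𝓡 s) (𝓡 (star s)) ∧
        ∀ r ∈ 𝓡 s, ε s * r = r ∧ r * ε (star s) = r)) := by
  have i_ii : IsUnitalEpsStrong star 𝓡 → IsSymmetricUnital star 𝓡 :=
    isSymmetricUnital_of_isUnitalEpsStrong hstar hsys
  have ii_iii : IsSymmetricUnital star 𝓡 → ∃ ε, IsEpsilonFamily star 𝓡 ε :=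
    exists_isEpsilonFamily_of_isSymmetricUnital hstar
  have iii_i : (∃ ε, IsEpsilonFamily star 𝓡 ε) → IsUnitalEpsStrong star 𝓡 :=
    fun ⟨_, hε⟩ => isUnitalEpsStrong_of_isEpsilonFamily hstar hε
  exact ⟨⟨i_ii, iii_i ∘ ii_iii⟩, ⟨ii_iii, i_ii ∘ iii_i⟩⟩

end PaperSys
end

section
/- Let S be an inverse semigroup and let R be a system over S. Then the following are equivalent: (i) R is s-unital epsilon-strong, i.e. R is both left and right s-unital epsilon-strong; (ii) R is symmetric and for every s ∈ S the ring R_s R_{s*} is s-unital; (iii) for every s ∈ S and every r ∈ R_s there exist ε ∈ R_s R_{s*} and ε' ∈ R_{s*} R_s with ε r = r and r ε' = r. -/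
open Pointwise

namespace PaperSys

variable {S R : Type*} [Semigroup S] [NonUnitalRing R]

section Aux

variable {R₁ : Type*} [NonUnitalRing R₁]

lemma mem_sumProd_mul {A B : AddSubgroup R₁} {a b : R₁} (ha : a ∈ A) (hb : b ∈ B) :
    a * b ∈ sumProd A B :=
  AddSubgroup.subset_closure (Set.mul_mem_mul ha hb)

lemma sumProd_le {A B C : AddSubgroup R₁}
    (h : ∀ a ∈ A, ∀ b ∈ B, a * b ∈ C) : sumProd A B ≤ C := by
  refine (AddSubgroup.closure_le _).mpr ?_
  rintro x ⟨a, ha, b, hb, rfl⟩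
  exact h a ha b hb

/-- Tominaga-style common left units. -/
lemma tominaga_left (T : AddSubgroup R₁)
    (hT : ∀ a ∈ T, ∀ b ∈ T, a * b ∈ T)
    (X : Set R₁) (hX : ∀ t ∈ T, ∀ x ∈ X, x - t * x ∈ X)
    (hu : ∀ x ∈ X, ∃ b ∈ T, b * x = x) :
    ∀ l : List R₁, (∀ x ∈ l, x ∈ X) → ∃ b ∈ T, ∀ x ∈ l, b * x = x := by
  intro l
  induction l with
  | nil => exact fun _ => ⟨0, T.zero_mem, fun x hx => absurd hx List.not_mem_nil⟩
  | cons y l ih =>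
    intro hl
    obtain ⟨b2, hb2T, hb2⟩ := ih fun x hx => hl x (List.mem_cons_of_mem _ hx)
    obtain ⟨b1, hb1T, hb1⟩ :=
      hu (y - b2 * y) (hX b2 hb2T y (hl y List.mem_cons_self))
    refine ⟨b2 + b1 - b1 * b2, T.sub_mem (T.add_mem hb2T hb1T) (hT b1 hb1T b2 hb2T), ?_⟩
    intro x hx
    rcases List.mem_cons.mp hx with rfl | hx
    · have h1 : b1 * x - b1 * (b2 * x) = x - b2 * x := by
        rw [← mul_sub]; exact hb1
      rw [sub_mul, add_mul, mul_assoc, add_sub_assoc, h1]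
      abel
    · have h2 : b2 * x = x := hb2 x hx
      rw [sub_mul, add_mul, mul_assoc, h2]
      abel

/-- Tominaga-style common right units. -/
lemma tominaga_right (T : AddSubgroup R₁)
    (hT : ∀ a ∈ T, ∀ b ∈ T, a * b ∈ T)
    (X : Set R₁) (hX : ∀ t ∈ T, ∀ x ∈ X, x - x * t ∈ X)
    (hu : ∀ x ∈ X, ∃ b ∈ T, x * b = x) :
    ∀ l : List R₁, (∀ x ∈ l, x ∈ X) → ∃ b ∈ T, ∀ x ∈ l, x * b = x := by
  intro l
  induction l with
  | nil => exact fun _ => ⟨0, T.zero_mem, fun x hx => absurd hx List.not_mem_nil⟩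
  | cons y l ih =>
    intro hl
    obtain ⟨b2, hb2T, hb2⟩ := ih fun x hx => hl x (List.mem_cons_of_mem _ hx)
    obtain ⟨b1, hb1T, hb1⟩ :=
      hu (y - y * b2) (hX b2 hb2T y (hl y List.mem_cons_self))
    refine ⟨b2 + b1 - b2 * b1, T.sub_mem (T.add_mem hb2T hb1T) (hT b2 hb2T b1 hb1T), ?_⟩
    intro x hx
    rcases List.mem_cons.mp hx with rfl | hx
    · have h1 : x * b1 - x * b2 * b1 = x - x * b2 := by
        rw [← sub_mul]; exact hb1
      rw [mul_sub, mul_add, ← mul_assoc, add_sub_assoc, h1]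
      abel
    · have h2 : x * b2 = x := hb2 x hx
      rw [mul_sub, mul_add, ← mul_assoc, h2]
      abel

lemma decompose_left (X Y : Set R₁) :
    ∀ r ∈ AddSubgroup.closure (X * Y),
      ∃ l : List R₁, (∀ a ∈ l, a ∈ X) ∧ ∀ b : R₁, (∀ a ∈ l, b * a = a) → b * r = r := by
  intro r hr
  induction hr using AddSubgroup.closure_induction with
  | mem g hg =>
    obtain ⟨x, hx, y, hy, rfl⟩ := hg
    exact ⟨[x], fun a ha => by rwa [List.mem_singleton.mp ha],
      fun b hb => by rw [← mul_assoc, hb x (List.mem_singleton_self x)]⟩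
  | zero => exact ⟨[], fun a ha => absurd ha List.not_mem_nil, fun b _ => mul_zero b⟩
  | add u v _ _ hu hv =>
    obtain ⟨l1, hl1, h1⟩ := hu
    obtain ⟨l2, hl2, h2⟩ := hv
    refine ⟨l1 ++ l2, fun a ha => (List.mem_append.mp ha).elim (hl1 a) (hl2 a), fun b hb => ?_⟩
    rw [mul_add, h1 b fun a ha => hb a (List.mem_append_left _ ha),
      h2 b fun a ha => hb a (List.mem_append_right _ ha)]
  | neg u _ hu =>
    obtain ⟨l, hl, h⟩ := hu
    exact ⟨l, hl, fun b hb => by rw [mul_neg, h b hb]⟩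

lemma decompose_right (X Y : Set R₁) :
    ∀ r ∈ AddSubgroup.closure (X * Y),
      ∃ l : List R₁, (∀ a ∈ l, a ∈ Y) ∧ ∀ b : R₁, (∀ a ∈ l, a * b = a) → r * b = r := by
  intro r hr
  induction hr using AddSubgroup.closure_induction with
  | mem g hg =>
    obtain ⟨x, hx, y, hy, rfl⟩ := hg
    exact ⟨[y], fun a ha => by rwa [List.mem_singleton.mp ha],
      fun b hb => by rw [mul_assoc, hb y (List.mem_singleton_self y)]⟩
  | zero => exact ⟨[], fun a ha => absurd ha List.not_mem_nil, fun b _ => zero_mul b⟩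
  | add u v _ _ hu hv =>
    obtain ⟨l1, hl1, h1⟩ := hu
    obtain ⟨l2, hl2, h2⟩ := hv
    refine ⟨l1 ++ l2, fun a ha => (List.mem_append.mp ha).elim (hl1 a) (hl2 a), fun b hb => ?_⟩
    rw [add_mul, h1 b fun a ha => hb a (List.mem_append_left _ ha),
      h2 b fun a ha => hb a (List.mem_append_right _ ha)]
  | neg u _ hu =>
    obtain ⟨l, hl, h⟩ := hu
    exact ⟨l, hl, fun b hb => by rw [neg_mul, h b hb]⟩

lemma closure_mul_le (X : Set R₁) (C : AddSubgroup R₁) :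
    sumProd (AddSubgroup.closure X) C ≤ AddSubgroup.closure (X * (C : Set R₁)) := by
  refine (AddSubgroup.closure_le _).mpr ?_
  rintro g ⟨u, hu, c, hc, rfl⟩
  induction hu using AddSubgroup.closure_induction with
  | mem x hx => exact AddSubgroup.subset_closure (Set.mul_mem_mul hx hc)
  | zero => show (0 : R₁) * c ∈ _; rw [zero_mul]; exact AddSubgroup.zero_mem _
  | add a b _ _ ha hb =>
    show (a + b) * c ∈ _
    rw [add_mul]; exact AddSubgroup.add_mem _ ha hb
  | neg a _ ha =>
    show (-a) * c ∈ _
    rw [neg_mul]; exact AddSubgroup.neg_mem _ ha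

end Aux

set_option maxHeartbeats 1000000 in
/-- Let `S` be an inverse semigroup and `R` a system over `S`.
The following are equivalent: (i) `R` is s-unital epsilon-strong (both left and right);
(ii) `R` is symmetric and every ring `R_s R_{s*}` is s-unital;
(iii) for every `s` and every `r ∈ R_s` there are `ε ∈ R_s R_{s*}` and
`ε' ∈ R_{s*} R_s` with `ε r = r` and `r ε' = r`. -/
theorem stmt8 {S R : Type*} [Semigroup S] [NonUnitalRing R]
    (star : S → S) (hstar : IsInverseStar star)
    (𝓡 : S → AddSubgroup R) (hsys : IsSystem 𝓡) :
    ((LeftSEps star 𝓡 ∧ RightSEps star 𝓡) ↔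
      (IsSymmetricSys star 𝓡 ∧
        ∀ s : S, ∀ a ∈ sumProd (𝓡 s) (𝓡 (star s)),
          (∃ b ∈ sumProd (𝓡 s) (𝓡 (star s)), b * a = a) ∧
          (∃ c ∈ sumProd (𝓡 s) (𝓡 (star s)), a * c = a))) ∧
    ((IsSymmetricSys star 𝓡 ∧
        ∀ s : S, ∀ a ∈ sumProd (𝓡 s) (𝓡 (star s)),
          (∃ b ∈ sumProd (𝓡 s) (𝓡 (star s)), b * a = a) ∧
          (∃ c ∈ sumProd (𝓡 s) (𝓡 (star s)), a * c = a)) ↔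
      (∀ s : S, ∀ r ∈ 𝓡 s, ∃ ε ∈ sumProd (𝓡 s) (𝓡 (star s)),
        ∃ ε' ∈ sumProd (𝓡 (star s)) (𝓡 s), ε * r = r ∧ r * ε' = r)) := by
  obtain ⟨-, hmul⟩ := hsys
  have hss : ∀ s : S, star (star s) = s := fun s =>
    (hstar.2.2 (star s) s (hstar.2.1 s) (hstar.1 s)).symm
  have hse : ∀ s : S, star s * (s * star s) = star s := fun s => by
    rw [← mul_assoc]; exact hstar.2.1 s
  have hTle : ∀ s : S, sumProd (𝓡 s) (𝓡 (star s)) ≤ 𝓡 (s * star s) := fun s =>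
    sumProd_le fun a ha b hb => hmul s (star s) a ha b hb
  -- absorption: (R_s R_{s*}) · R_s ⊆ R_s and R_{s*} · (R_s R_{s*}) ⊆ R_{s*}
  have habsL : ∀ s : S, ∀ t ∈ sumProd (𝓡 s) (𝓡 (star s)), ∀ x ∈ 𝓡 s, t * x ∈ 𝓡 s := by
    intro s t ht x hx
    have := hmul (s * star s) s t (hTle s ht) x hx
    rwa [hstar.1 s] at this
  have habsR : ∀ s : S, ∀ t ∈ sumProd (𝓡 s) (𝓡 (star s)), ∀ x ∈ 𝓡 (star s),
      x * t ∈ 𝓡 (star s) := by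
    intro s t ht x hx
    have := hmul (star s) (s * star s) x hx t (hTle s ht)
    rwa [hse s] at this
  -- R_s R_{s*} is closed under multiplication
  have hTmul : ∀ s : S, ∀ a ∈ sumProd (𝓡 s) (𝓡 (star s)),
      ∀ b ∈ sumProd (𝓡 s) (𝓡 (star s)), a * b ∈ sumProd (𝓡 s) (𝓡 (star s)) := by
    intro s a ha b hb
    induction hb using AddSubgroup.closure_induction with
    | mem g hg =>
      obtain ⟨u, hu, v, hv, rfl⟩ := hg
      have haE : a ∈ 𝓡 (s * star s) := hTle s ha
      have hau : a * u ∈ 𝓡 s := by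
        have := hmul (s * star s) s a haE u hu
        rwa [hstar.1 s] at this
      rw [← mul_assoc]
      exact mem_sumProd_mul hau hv
    | zero =>
      show a * 0 ∈ _
      rw [mul_zero]; exact AddSubgroup.zero_mem _
    | add u v _ _ h1 h2 =>
      show a * (u + v) ∈ _
      rw [mul_add]; exact AddSubgroup.add_mem _ h1 h2
    | neg u _ h =>
      show a * (-u) ∈ _
      rw [mul_neg]; exact AddSubgroup.neg_mem _ h
  -- (i) → (ii)
  have h1to2 : (LeftSEps star 𝓡 ∧ RightSEps star 𝓡) →
      (IsSymmetricSys star 𝓡 ∧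
        ∀ s : S, ∀ a ∈ sumProd (𝓡 s) (𝓡 (star s)),
          (∃ b ∈ sumProd (𝓡 s) (𝓡 (star s)), b * a = a) ∧
          (∃ c ∈ sumProd (𝓡 s) (𝓡 (star s)), a * c = a)) := by
    rintro ⟨hL, hR⟩
    constructor
    · intro s
      apply le_antisymm
      · exact sumProd_le fun a ha x hx => habsL s a ha x hx
      · intro r hr
        obtain ⟨ε, hε, hεr⟩ := hL s r hr
        exact hεr ▸ mem_sumProd_mul hε hr
    · intro s a ha
      constructor
      · obtain ⟨l, hlX, hfix⟩ := decompose_left (((𝓡 s : AddSubgroup R) : Set R)) (((𝓡 (star s) : AddSubgroup R) : Set R)) a ha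
        obtain ⟨b, hbT, hb⟩ := tominaga_left (sumProd (𝓡 s) (𝓡 (star s))) (hTmul s)
          (((𝓡 s : AddSubgroup R) : Set R)) (fun t ht x hx => (𝓡 s).sub_mem hx (habsL s t ht x hx))
          (fun x hx => hL s x hx) l hlX
        exact ⟨b, hbT, hfix b hb⟩
      · obtain ⟨l, hlY, hfix⟩ := decompose_right (((𝓡 s : AddSubgroup R) : Set R)) (((𝓡 (star s) : AddSubgroup R) : Set R)) a ha
        obtain ⟨b, hbT, hb⟩ := tominaga_right (sumProd (𝓡 s) (𝓡 (star s))) (hTmul s)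
          (((𝓡 (star s) : AddSubgroup R) : Set R)) (fun t ht x hx => (𝓡 (star s)).sub_mem hx (habsR s t ht x hx))
          (fun x hx => by
            obtain ⟨ε, hε, h⟩ := hR (star s) x hx
            rw [hss s] at hε
            exact ⟨ε, hε, h⟩) l hlY
        exact ⟨b, hbT, hfix b hb⟩
  -- (ii) → (iii)
  have h2to3 : (IsSymmetricSys star 𝓡 ∧
        ∀ s : S, ∀ a ∈ sumProd (𝓡 s) (𝓡 (star s)),
          (∃ b ∈ sumProd (𝓡 s) (𝓡 (star s)), b * a = a) ∧
          (∃ c ∈ sumProd (𝓡 s) (𝓡 (star s)), a * c = a)) →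
      (∀ s : S, ∀ r ∈ 𝓡 s, ∃ ε ∈ sumProd (𝓡 s) (𝓡 (star s)),
        ∃ ε' ∈ sumProd (𝓡 (star s)) (𝓡 s), ε * r = r ∧ r * ε' = r) := by
    rintro ⟨hsym, hU⟩ s r hr
    have hr2 : r ∈ sumProd (sumProd (𝓡 s) (𝓡 (star s))) (𝓡 s) := by
      rw [hsym s]; exact hr
    have hr3 : r ∈ AddSubgroup.closure ((((𝓡 s : AddSubgroup R) : Set R) * ((𝓡 (star s) : AddSubgroup R) : Set R)) * (((𝓡 s : AddSubgroup R) : Set R) : Set R)) :=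
      closure_mul_le _ _ hr2
    obtain ⟨l1, hl1, hfix1⟩ := decompose_left (((𝓡 s : AddSubgroup R) : Set R) * ((𝓡 (star s) : AddSubgroup R) : Set R)) (((𝓡 s : AddSubgroup R) : Set R)) r hr3
    obtain ⟨b, hbT, hb⟩ := tominaga_left (sumProd (𝓡 s) (𝓡 (star s))) (hTmul s)
      ((sumProd (𝓡 s) (𝓡 (star s)) : AddSubgroup R) : Set R)
      (fun t ht x hx => AddSubgroup.sub_mem _ hx (hTmul s t ht x hx))
      (fun x hx => (hU s x hx).1) l1
      (fun a ha => AddSubgroup.subset_closure (hl1 a ha))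
    have hr4 : r ∈ AddSubgroup.closure (((𝓡 s : AddSubgroup R) : Set R) * (((𝓡 (star s) : AddSubgroup R) : Set R) * (((𝓡 s : AddSubgroup R) : Set R) : Set R))) := by
      rwa [← mul_assoc]
    obtain ⟨l2, hl2, hfix2⟩ := decompose_right (((𝓡 s : AddSubgroup R) : Set R)) (((𝓡 (star s) : AddSubgroup R) : Set R) * ((𝓡 s : AddSubgroup R) : Set R)) r hr4
    have hT'mul : ∀ a ∈ sumProd (𝓡 (star s)) (𝓡 s), ∀ b ∈ sumProd (𝓡 (star s)) (𝓡 s),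
        a * b ∈ sumProd (𝓡 (star s)) (𝓡 s) := by
      have := hTmul (star s); rwa [hss s] at this
    have hU' : ∀ a ∈ sumProd (𝓡 (star s)) (𝓡 s),
        ∃ c ∈ sumProd (𝓡 (star s)) (𝓡 s), a * c = a := by
      have := hU (star s); rw [hss s] at this
      exact fun a ha => (this a ha).2
    obtain ⟨c, hcT, hc⟩ := tominaga_right (sumProd (𝓡 (star s)) (𝓡 s)) hT'mul
      ((sumProd (𝓡 (star s)) (𝓡 s) : AddSubgroup R) : Set R)
      (fun t ht x hx => AddSubgroup.sub_mem _ hx (hT'mul x hx t ht)) hU' l2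
      (fun a ha => AddSubgroup.subset_closure (hl2 a ha))
    exact ⟨b, hbT, c, hcT, hfix1 b hb, hfix2 c hc⟩
  -- (iii) → (i)
  have h3to1 : (∀ s : S, ∀ r ∈ 𝓡 s, ∃ ε ∈ sumProd (𝓡 s) (𝓡 (star s)),
        ∃ ε' ∈ sumProd (𝓡 (star s)) (𝓡 s), ε * r = r ∧ r * ε' = r) →
      (LeftSEps star 𝓡 ∧ RightSEps star 𝓡) := by
    intro h
    constructor
    · intro s r hr
      obtain ⟨ε, hε, _, _, h1, _⟩ := h s r hr
      exact ⟨ε, hε, h1⟩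
    · intro s r hr
      obtain ⟨_, _, ε', hε', _, h2⟩ := h s r hr
      exact ⟨ε', hε', h2⟩
  exact ⟨⟨h1to2, fun h => h3to1 (h2to3 h)⟩, ⟨h2to3, fun h => h1to2 (h3to1 h)⟩⟩

end PaperSys
end

section
/- Let S be an inverse semigroup and let R be a system over S that is coherent and s-unital epsilon-strong. If R_0 is a maximal commutative subring of R, then R is a simple ring if and only if R is system simple. -/
/-!
A system ideal is an ideal, so simplicity gives system simplicity. Conversely, coherence makes
`R₀ R_s ⊆ R_s ⊇ R_s R₀` (as `f s ≤ s ≥ s f` for idempotent `f`), so the maps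
`w ↦ w - w ε`, `w ↦ w - ε w` and `w ↦ z (w a) - (w a) z` with `ε, z ∈ R₀` preserve homogeneity.
Take a nonzero `x` in an ideal `I` written with the fewest homogeneous terms, the first one
`r ∈ R_s`. If `x R_{s*} = 0`, the local unit `ε' ∈ R_{s*} R_s` of `r` gives `x = x - x ε'`, a
shorter sum, which is absurd; otherwise some `x a ≠ 0` with `a ∈ R_{s*}` has first term in
`R_{s s*} ⊆ R₀`, so its commutator with any `z ∈ R₀` is shorter and vanishes, and `x a ∈ R₀` by
maximality. Repeating the argument inside `R₀` with the left local unit of the first term yields a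
nonzero element of some `I ∩ R_e`. Hence the system ideal `Σ_s (I ∩ R_s) ⊆ I` is nonzero, so it is
`R`.
-/

open Pointwise

namespace PaperSys

variable {S R : Type*} [Semigroup S] [NonUnitalRing R]

/-- The natural partial order `s ≤ t` of an inverse semigroup. -/
def NatLE (star : S → S) (s t : S) : Prop :=
  s = t * star s * s

namespace IsInverseStar

variable {star : S → S} (h : IsInverseStar star)
include h

theorem star_star_s10 (s : S) : star (star s) = s :=
  (h.2.2 (star s) s (h.2.1 s) (h.1 s)).symm

theorem star_eq_self {e : S} (he : IsIdempotentElem e) : star e = e := by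
  have hee : e * e * e = e := by rw [he.eq, he.eq]
  exact (h.2.2 e e hee hee).symm

theorem isIdempotentElem_mul_star (s : S) : IsIdempotentElem (s * star s) := by
  change s * star s * (s * star s) = s * star s
  rw [← mul_assoc, h.1]

theorem isIdempotentElem_star_mul (s : S) : IsIdempotentElem (star s * s) := by
  change star s * s * (star s * s) = star s * s
  rw [← mul_assoc, h.2.1]

/- With `u = (ef)*`, the element `f u e` is also an inverse of `ef`, so it equals `u`;
this makes `u` idempotent, hence `ef = u* = u` is idempotent. -/
theorem isIdempotentElem_mul {e f : S} (he : IsIdempotentElem e) (hf : IsIdempotentElem f) :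
    IsIdempotentElem (e * f) := by
  set u := star (e * f) with hu
  have hfue : f * u * e = u := by
    refine h.2.2 (e * f) (f * u * e) ?_ ?_
    · calc e * f * (f * u * e) * (e * f) = e * (f * f) * u * ((e * e) * f) := by
            simp only [mul_assoc]
        _ = e * f * u * (e * f) := by rw [hf.eq, he.eq]
        _ = e * f := h.1 (e * f)
    · calc f * u * e * (e * f) * (f * u * e) = f * (u * (e * e) * (f * f) * u) * e := by
            simp only [mul_assoc]
        _ = f * (u * (e * f) * u) * e := by rw [he.eq, hf.eq, mul_assoc u e f]
        _ = f * u * e := by rw [hu, h.2.1]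
  have hu_idem : IsIdempotentElem u := by
    change u * u = u
    conv_lhs => rw [← hfue]
    calc f * u * e * (f * u * e) = f * (u * (e * f) * u) * e := by simp only [mul_assoc]
      _ = f * u * e := by rw [hu, h.2.1]
      _ = u := hfue
  have hef : e * f = u := by rw [← h.star_star_s10 (e * f), ← hu, h.star_eq_self hu_idem]
  rw [hef]
  exact hu_idem

theorem commute_of_isIdempotentElem {e f : S} (he : IsIdempotentElem e)
    (hf : IsIdempotentElem f) : Commute e f := by
  have hfe : f * e = star (e * f) := by
    refine h.2.2 (e * f) (f * e) ?_ ?_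
    · calc e * f * (f * e) * (e * f) = (e * (f * f)) * ((e * e) * f) := by
            simp only [mul_assoc]
        _ = e * f := by rw [hf.eq, he.eq, (h.isIdempotentElem_mul he hf).eq]
    · calc f * e * (e * f) * (f * e) = (f * (e * e)) * ((f * f) * e) := by
            simp only [mul_assoc]
        _ = f * e := by rw [he.eq, hf.eq, (h.isIdempotentElem_mul hf he).eq]
  change e * f = f * e
  rw [hfe, h.star_eq_self (h.isIdempotentElem_mul he hf)]

theorem star_mul (s t : S) : star (s * t) = star t * star s := by
  have hcomm : t * star t * (star s * s) = star s * s * (t * star t) :=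
    h.commute_of_isIdempotentElem (h.isIdempotentElem_mul_star t) (h.isIdempotentElem_star_mul s)
  refine (h.2.2 (s * t) (star t * star s) ?_ ?_).symm
  · calc s * t * (star t * star s) * (s * t) = s * (t * star t * (star s * s)) * t := by
          simp only [mul_assoc]
      _ = s * star s * s * (t * star t * t) := by rw [hcomm]; simp only [mul_assoc]
      _ = s * t := by rw [h.1, h.1]
  · calc star t * star s * (s * t) * (star t * star s)
          = star t * (star s * s * (t * star t)) * star s := by simp only [mul_assoc]
      _ = star t * t * star t * (star s * s * star s) := by rw [← hcomm]; simp only [mul_assoc]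
      _ = star t * star s := by rw [h.2.1, h.2.1]

theorem natLE_mul_idem {f : S} (hf : IsIdempotentElem f) (s : S) : NatLE star (s * f) s := by
  have hcomm : f * (star s * s) = star s * s * f :=
    h.commute_of_isIdempotentElem hf (h.isIdempotentElem_star_mul s)
  unfold NatLE
  rw [h.star_mul, h.star_eq_self hf]
  calc s * f = s * star s * s * (f * f) := by rw [h.1, hf.eq]
    _ = s * (f * (star s * s)) * f := by rw [hcomm]; simp only [mul_assoc]
    _ = s * (f * star s) * (s * f) := by simp only [mul_assoc]

theorem natLE_idem_mul {f : S} (hf : IsIdempotentElem f) (s : S) : NatLE star (f * s) s := by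
  have hcomm : s * star s * f = f * (s * star s) :=
    h.commute_of_isIdempotentElem (h.isIdempotentElem_mul_star s) hf
  unfold NatLE
  rw [h.star_mul, h.star_eq_self hf]
  calc f * s = f * (s * star s * s) := by rw [h.1]
    _ = s * star s * f * s := by rw [hcomm]; simp only [mul_assoc]
    _ = s * (star s * f) * (f * s) := by simp only [mul_assoc]; rw [← mul_assoc f f s, hf.eq]

end IsInverseStar

theorem IsSystem.sumProd_le {𝓡 : S → AddSubgroup R} (hsys : IsSystem 𝓡) (s t : S) :
    sumProd (𝓡 s) (𝓡 t) ≤ 𝓡 (s * t) := by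
  refine (AddSubgroup.closure_le _).2 ?_
  rintro _ ⟨a, ha, b, hb, rfl⟩
  exact hsys.2 s t a ha b hb

theorem le_sysZero (𝓡 : S → AddSubgroup R) {e : S} (he : IsIdempotentElem e) :
    𝓡 e ≤ sysZero 𝓡 :=
  le_iSup₂ (f := fun e (_ : e ∈ {e : S | e * e = e}) => 𝓡 e) e he

theorem IsInverseStar.idemCoherent {star : S → S} (hstar : IsInverseStar star)
    {𝓡 : S → AddSubgroup R} (hsys : IsSystem 𝓡) (hcoh : Coherent star 𝓡) :
    IdemCoherent 𝓡 := by
  intro s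
  constructor
  · intro z hz y hy
    have hle : sysZero 𝓡 ≤ (𝓡 s).comap (AddMonoidHom.mulRight y) := iSup₂_le fun e he x hx =>
      hcoh _ s (hstar.natLE_idem_mul he s) (hsys.2 _ s x hx y hy)
    exact hle hz
  · intro z hz y hy
    have hle : sysZero 𝓡 ≤ (𝓡 s).comap (AddMonoidHom.mulLeft y) := iSup₂_le fun e he x hx =>
      hcoh _ s (hstar.natLE_mul_idem he s) (hsys.2 s _ y hy x hx)
    exact hle hz

theorem MaxCommZero.mem_sysZero_iff {𝓡 : S → AddSubgroup R} (hmax : MaxCommZero 𝓡) {z : R} :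
    z ∈ sysZero 𝓡 ↔ ∀ y ∈ sysZero 𝓡, z * y = y * z :=
  (Set.ext_iff.mp hmax z).symm

theorem mul_eq_zero_of_mem_sumProd {A B : AddSubgroup R} {x ε : R}
    (hx : ∀ a ∈ A, x * a = 0) (hε : ε ∈ sumProd A B) : x * ε = 0 := by
  induction hε using AddSubgroup.closure_induction with
  | mem _ hab =>
    obtain ⟨a, ha, b, -, rfl⟩ := hab
    rw [← mul_assoc, hx a ha, zero_mul]
  | zero => exact mul_zero x
  | add _ _ _ _ h₁ h₂ => rw [mul_add, h₁, h₂, add_zero]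
  | neg _ _ h => rw [mul_neg, h, neg_zero]

omit [Semigroup S] in
theorem leftSEps_of_forall {star : S → S} {𝓡 : S → AddSubgroup R}
    (heps : ∀ s : S, ∀ r ∈ 𝓡 s, ∃ ε ∈ sumProd (𝓡 s) (𝓡 (star s)),
      ∃ ε' ∈ sumProd (𝓡 (star s)) (𝓡 s), ε * r = r ∧ r * ε' = r) :
    LeftSEps star 𝓡 := fun s r hr =>
  let ⟨ε, hε, _, _, hεr, _⟩ := heps s r hr
  ⟨ε, hε, hεr⟩

omit [Semigroup S] in
theorem rightSEps_of_forall {star : S → S} {𝓡 : S → AddSubgroup R}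
    (heps : ∀ s : S, ∀ r ∈ 𝓡 s, ∃ ε ∈ sumProd (𝓡 s) (𝓡 (star s)),
      ∃ ε' ∈ sumProd (𝓡 (star s)) (𝓡 s), ε * r = r ∧ r * ε' = r) :
    RightSEps star 𝓡 := fun s r hr =>
  let ⟨_, _, ε', hε', _, hrε'⟩ := heps s r hr
  ⟨ε', hε', hrε'⟩

section MinimalSupport

omit [Semigroup S]

variable (𝓡 : S → AddSubgroup R) (P : Set S)

def homogeneous : Set R :=
  ⋃ s ∈ P, (𝓡 s : Set R)

theorem mem_homogeneous {x : R} : x ∈ homogeneous 𝓡 P ↔ ∃ s ∈ P, x ∈ 𝓡 s := by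
  simp [homogeneous]

theorem mem_iSup_of_mem_homogeneous {x : R} (hx : x ∈ homogeneous 𝓡 P) :
    x ∈ ⨆ s ∈ P, 𝓡 s := by
  obtain ⟨s, hs, hx⟩ := (mem_homogeneous 𝓡 P).1 hx
  exact le_iSup₂ (f := fun s (_ : s ∈ P) => 𝓡 s) s hs hx

theorem exists_list_homogeneous_of_mem_iSup {x : R} (hx : x ∈ ⨆ s ∈ P, 𝓡 s) :
    ∃ l : List R, (∀ y ∈ l, y ∈ homogeneous 𝓡 P) ∧ l.sum = x := by
  rw [← iSup_subtype''] at hx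
  refine AddSubgroup.iSup_induction (C := fun x => ∃ l : List R,
    (∀ y ∈ l, y ∈ homogeneous 𝓡 P) ∧ l.sum = x) _ hx (fun s y hy => ?_)
    ⟨[], by simp, List.sum_nil⟩ ?_
  · exact ⟨[y], by simpa using (mem_homogeneous 𝓡 P).2 ⟨s, s.2, hy⟩, List.sum_singleton⟩
  · rintro _ _ h₁ h₂
    obtain ⟨l₁, hl₁, rfl⟩ := h₁
    obtain ⟨l₂, hl₂, rfl⟩ := h₂
    exact ⟨l₁ ++ l₂, by simpa [or_imp, forall_and] using ⟨hl₁, hl₂⟩, List.sum_append⟩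

/- A nonzero element `x = r + r₂ + ⋯ + r_n` of `I` written with the least possible number of
homogeneous terms: any additive map preserving `I` and homogeneity sends the tail `r₂ + ⋯ + r_n`
to a sum of fewer homogeneous terms in `I` once it kills `r`, so it kills `x`. -/
theorem exists_minimal_support {I : AddSubgroup R}
    (h : ∃ x ∈ I, x ≠ 0 ∧ x ∈ ⨆ s ∈ P, 𝓡 s) :
    ∃ x ∈ I, x ≠ 0 ∧ x ∈ ⨆ s ∈ P, 𝓡 s ∧ ∃ r ∈ homogeneous 𝓡 P,
      ∀ φ : R →+ R, Set.MapsTo φ I I → Set.MapsTo φ (homogeneous 𝓡 P) (homogeneous 𝓡 P) →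
        φ r = 0 → φ x = 0 := by
  classical
  have hex : ∃ n, ∃ l : List R, l.length = n ∧ (∀ y ∈ l, y ∈ homogeneous 𝓡 P) ∧
      l.sum ∈ I ∧ l.sum ≠ 0 := by
    obtain ⟨x, hxI, hx0, hx⟩ := h
    obtain ⟨l, hl, rfl⟩ := exists_list_homogeneous_of_mem_iSup 𝓡 P hx
    exact ⟨l.length, l, rfl, hl, hxI, hx0⟩
  obtain ⟨_ | ⟨r, t⟩, hlen, hl, hlI, hl0⟩ := Nat.find_spec hex
  · exact absurd List.sum_nil hl0
  refine ⟨(r :: t).sum, hlI, hl0, list_sum_mem fun y hy =>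
    mem_iSup_of_mem_homogeneous 𝓡 P (hl y hy), r, hl r List.mem_cons_self, ?_⟩
  intro φ hφI hφH hr
  have htail : φ (r :: t).sum = (t.map φ).sum := by
    rw [List.sum_cons, map_add, hr, zero_add, map_list_sum]
  by_contra hφ
  refine Nat.find_min hex (m := t.length) (by simp [← hlen])
    ⟨t.map φ, List.length_map _, ?_, htail ▸ hφI hlI, htail ▸ hφ⟩
  simp only [List.mem_map]
  rintro _ ⟨y, hy, rfl⟩
  exact hφH (hl y (List.mem_cons_of_mem r hy))

end MinimalSupport

section Simplicity

variable {star : S → S} {𝓡 : S → AddSubgroup R} {I : AddSubgroup R}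

theorem exists_ne_zero_mem_sysZero (hstar : IsInverseStar star) (hsys : IsSystem 𝓡)
    (hic : IdemCoherent 𝓡) (hmax : MaxCommZero 𝓡) (hright : RightSEps star 𝓡)
    (hI : IsRingIdeal I) (hne : I ≠ ⊥) : ∃ y ∈ I, y ≠ 0 ∧ y ∈ sysZero 𝓡 := by
  obtain ⟨x₀, hx₀I, hx₀⟩ := I.bot_or_exists_ne_zero.resolve_left hne
  have hx₀_mem : x₀ ∈ ⨆ s ∈ Set.univ, 𝓡 s := by
    rw [iSup_univ, hsys.1]
    exact AddSubgroup.mem_top x₀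
  obtain ⟨x, hxI, hx0, -, r, hr, hmin⟩ :=
    exists_minimal_support 𝓡 Set.univ ⟨x₀, hx₀I, hx₀, hx₀_mem⟩
  obtain ⟨s, -, hr⟩ := (mem_homogeneous 𝓡 _).1 hr
  by_cases hann : ∀ a ∈ 𝓡 (star s), x * a = 0
  · obtain ⟨ε, hε, hrε⟩ := hright s r hr
    have hε0 : ε ∈ sysZero 𝓡 :=
      le_sysZero 𝓡 (hstar.isIdempotentElem_star_mul s) (hsys.sumProd_le _ _ hε)
    let φ : R →+ R := AddMonoidHom.id R - AddMonoidHom.mulRight ε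
    have hφx : x - x * ε = 0 := by
      refine hmin φ (fun y hy => sub_mem hy (hI ε y hy).2) (fun y hy => ?_) (sub_eq_zero.2 hrε.symm)
      obtain ⟨t, ht, hy⟩ := (mem_homogeneous 𝓡 _).1 hy
      exact (mem_homogeneous 𝓡 _).2 ⟨t, ht, sub_mem hy ((hic t).2 ε hε0 y hy)⟩
    rw [mul_eq_zero_of_mem_sumProd hann hε, sub_zero] at hφx
    exact absurd hφx hx0
  · obtain ⟨a, ha, hxa⟩ : ∃ a ∈ 𝓡 (star s), x * a ≠ 0 := by simpa using hann
    refine ⟨x * a, (hI a x hxI).2, hxa, hmax.mem_sysZero_iff.2 fun z hz => ?_⟩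
    have hra : r * a ∈ sysZero 𝓡 :=
      le_sysZero 𝓡 (hstar.isIdempotentElem_mul_star s) (hsys.2 _ _ _ hr _ ha)
    let φ : R →+ R :=
      (AddMonoidHom.mulLeft z - AddMonoidHom.mulRight z).comp (AddMonoidHom.mulRight a)
    have hφx : z * (x * a) - x * a * z = 0 := by
      refine hmin φ (fun y hy => ?_) (fun y hy => ?_)
        (sub_eq_zero.2 (hmax.mem_sysZero_iff.1 hra z hz).symm)
      · have hya : y * a ∈ I := (hI a y hy).2
        exact sub_mem (hI z _ hya).1 (hI z _ hya).2
      · obtain ⟨t, -, hy⟩ := (mem_homogeneous 𝓡 _).1 hy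
        have hya : y * a ∈ 𝓡 (t * star s) := hsys.2 _ _ _ hy _ ha
        exact (mem_homogeneous 𝓡 _).2
          ⟨t * star s, trivial, sub_mem ((hic _).1 z hz _ hya) ((hic _).2 z hz _ hya)⟩
    exact (sub_eq_zero.1 hφx).symm

theorem exists_ne_zero_mem_component_of_mem_sysZero (hstar : IsInverseStar star)
    (hsys : IsSystem 𝓡) (hic : IdemCoherent 𝓡) (hleft : LeftSEps star 𝓡) (hI : IsRingIdeal I)
    {y : R} (hyI : y ∈ I) (hy0 : y ≠ 0) (hyZ : y ∈ sysZero 𝓡) : ∃ e, ∃ x ∈ I, x ≠ 0 ∧ x ∈ 𝓡 e := by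
  obtain ⟨x, hxI, hx0, hxZ, r, hr, hmin⟩ :=
    exists_minimal_support 𝓡 {e | e * e = e} ⟨y, hyI, hy0, hyZ⟩
  obtain ⟨e, he, hr⟩ := (mem_homogeneous 𝓡 _).1 hr
  obtain ⟨ε, hε, hεr⟩ := hleft e r hr
  have hεe : ε ∈ 𝓡 e := by
    have hε' := hsys.sumProd_le _ _ hε
    rwa [hstar.star_eq_self he, show e * e = e from he] at hε'
  have hε0 : ε ∈ sysZero 𝓡 := le_sysZero 𝓡 he hεe
  let φ : R →+ R := AddMonoidHom.id R - AddMonoidHom.mulLeft ε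
  have hφx : x - ε * x = 0 := by
    refine hmin φ (fun w hw => sub_mem hw (hI ε w hw).1) (fun w hw => ?_) (sub_eq_zero.2 hεr.symm)
    obtain ⟨t, ht, hw⟩ := (mem_homogeneous 𝓡 _).1 hw
    exact (mem_homogeneous 𝓡 _).2 ⟨t, ht, sub_mem hw ((hic t).1 ε hε0 w hw)⟩
  refine ⟨e, x, hxI, hx0, ?_⟩
  rw [sub_eq_zero.1 hφx]
  exact (hic e).2 x hxZ ε hεe

end Simplicity

theorem isSystemIdeal_iSup_inf {𝓡 : S → AddSubgroup R} (hsys : IsSystem 𝓡)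
    {I : AddSubgroup R} (hI : IsRingIdeal I) : IsSystemIdeal 𝓡 (⨆ s, I ⊓ 𝓡 s) := by
  set J := ⨆ s, I ⊓ 𝓡 s
  have hmem : ∀ s, ∀ x ∈ I ⊓ 𝓡 s, x ∈ J := fun s x hx => AddSubgroup.mem_iSup_of_mem s hx
  refine ⟨fun r w hw => ?_,
    le_antisymm (iSup_mono fun s => le_inf (le_iSup (fun s => I ⊓ 𝓡 s) s) inf_le_right)
    (iSup_le fun s => inf_le_left)⟩
  have hr : r ∈ ⨆ t, 𝓡 t := hsys.1 ▸ AddSubgroup.mem_top r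
  have hadd : ∀ a b a' b' : R, (a * b ∈ J ∧ b * a ∈ J) → (a' * b' ∈ J ∧ b' * a' ∈ J) →
      (a * b + a' * b' ∈ J ∧ b * a + b' * a' ∈ J) :=
    fun _ _ _ _ h h' => ⟨add_mem h.1 h'.1, add_mem h.2 h'.2⟩
  refine AddSubgroup.iSup_induction (C := fun w => r * w ∈ J ∧ w * r ∈ J) _ hw
    (fun s w hw => ?_) (by simp only [mul_zero, zero_mul, zero_mem, and_self])
    (fun w w' h h' => by simpa only [mul_add, add_mul] using hadd _ _ _ _ h h')
  refine AddSubgroup.iSup_induction (C := fun r => r * w ∈ J ∧ w * r ∈ J) _ hr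
    (fun t r hr => ?_) (by simp only [mul_zero, zero_mul, zero_mem, and_self])
    (fun r r' h h' => by simpa only [mul_add, add_mul] using hadd _ _ _ _ h h')
  exact ⟨hmem (t * s) _ ⟨(hI r w hw.1).1, hsys.2 t s r hr w hw.2⟩,
    hmem (s * t) _ ⟨(hI r w hw.1).2, hsys.2 s t w hw.2 r hr⟩⟩

/-- Let `S` be an inverse semigroup and `R` a coherent,
s-unital epsilon-strong system over `S`. If `R₀` is a maximal commutative subring
of `R`, then `R` is simple iff `R` is system simple. -/
theorem stmt10 {S R : Type*} [Semigroup S] [NonUnitalRing R]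
    (star : S → S) (hstar : IsInverseStar star)
    (𝓡 : S → AddSubgroup R) (hsys : IsSystem 𝓡)
    (hcoh : Coherent star 𝓡)
    (heps : ∀ s : S, ∀ r ∈ 𝓡 s, ∃ ε ∈ sumProd (𝓡 s) (𝓡 (star s)),
      ∃ ε' ∈ sumProd (𝓡 (star s)) (𝓡 s), ε * r = r ∧ r * ε' = r)
    (hmax : MaxCommZero 𝓡) :
    RingSimple R ↔ SystemSimple 𝓡 := by
  refine ⟨fun hR I hI => hR I hI.1, fun hS I hI => ?_⟩
  refine or_iff_not_imp_left.2 fun hne => ?_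
  have hic := hstar.idemCoherent hsys hcoh
  obtain ⟨y, hyI, hy0, hyZ⟩ :=
    exists_ne_zero_mem_sysZero hstar hsys hic hmax (rightSEps_of_forall heps) hI hne
  obtain ⟨e, x, hxI, hx0, hxe⟩ :=
    exists_ne_zero_mem_component_of_mem_sysZero hstar hsys hic (leftSEps_of_forall heps) hI
      hyI hy0 hyZ
  have hxJ : x ∈ ⨆ s, I ⊓ 𝓡 s := AddSubgroup.mem_iSup_of_mem e ⟨hxI, hxe⟩
  rcases hS _ (isSystemIdeal_iSup_inf hsys hI) with hJ | hJ
  · exact absurd ((AddSubgroup.mem_bot).1 (hJ ▸ hxJ)) hx0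
  · exact top_unique (hJ ▸ iSup_le fun s => inf_le_left)

end PaperSys
end
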